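/- Let A be an admissible list of integers and n a positive integer. Then the adjoint of the list A ++ [n+1] equals TW_n ⋆ A*, where TW_n is the list of n copies of 2 and ⋆ is the plumbing concatenation defined by [a_1,...,a_r] ⋆ [b_1,...,b_s] = [a_1,...,a_{r-1}, a_r + b_1 - 1, b_2,...,b_s]. -/

import Mathlib

/-- Discriminant of a linear chain: determinant of the tridiagonal matrix. -/
def chainD : List ℤ → ℤ
  | [] => 1
  | [a] => a
  | a :: b :: L => a * chainD (b :: L) - chainD L

/-- A list is admissible if it is nonempty and all entries are at least 2. -/
def Admissible (A : List ℤ) : Prop := A ≠ [] ∧ ∀ x ∈ A, 2 ≤ x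

/-- Inductance e(A) = d(Ā)/d(A). -/
def inductance (A : List ℤ) : ℚ := (chainD A.tail : ℚ) / (chainD A : ℚ)

/-- Plumbing concatenation ⋆ of linear chains. -/
def pstar : List ℤ → List ℤ → List ℤ
  | [], B => B
  | A, [] => A
  | [a], b :: B => (a + b - 1) :: B
  | a :: A, B => a :: pstar A B

/-- TW n : the list of n copies of 2. -/
def TW (n : ℕ) : List ℤ := List.replicate n 2

/-! Expanding the discriminant along the first entry gives the continued fraction
`e(a :: L) = 1 / (a - e(L))`, with `0 < e(L) < 1` for admissible `L`. Hence `a = ⌈1 / e(a :: L)⌉`,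
`e` is injective on admissible lists, and it suffices to compare inductances. On the left,
`e((A ++ [n + 1]).reverse) = 1 / (n + 1 - e(A.reverse)) = 1 / (n + e(A*))`. On the right, the
discriminants of `TW n ⋆ B` and of its tail are `n d(B) + d(B.tail)` and `(n - 1) d(B) + d(B.tail)`,
whence `e(TW n ⋆ B) = 1 - 1 / (n + e(B))`. -/

lemma Admissible.tail {a : ℤ} {L : List ℤ} (hL : L ≠ []) (h : Admissible (a :: L)) :
    Admissible L :=
  ⟨hL, fun x hx => h.2 x (List.mem_cons_of_mem a hx)⟩

lemma Admissible.cons {a : ℤ} (ha : 2 ≤ a) {L : List ℤ} (hL : ∀ x ∈ L, 2 ≤ x) :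
    Admissible (a :: L) :=
  ⟨List.cons_ne_nil a L, List.forall_mem_cons.mpr ⟨ha, hL⟩⟩

lemma Admissible.reverse {A : List ℤ} (h : Admissible A) : Admissible A.reverse :=
  ⟨List.reverse_ne_nil_iff.mpr h.1, fun x hx => h.2 x (List.mem_reverse.mp hx)⟩

lemma chainD_cons_of_ne_nil (a : ℤ) {L : List ℤ} (hL : L ≠ []) :
    chainD (a :: L) = a * chainD L - chainD L.tail := by
  obtain ⟨b, M, rfl⟩ := List.exists_cons_of_ne_nil hL
  rfl

lemma chainD_cons_add_one (b : ℤ) (M : List ℤ) :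
    chainD ((b + 1) :: M) = chainD (b :: M) + chainD M := by
  cases M <;> simp only [chainD]; ring

lemma Admissible.chainD_tail_pos_lt {A : List ℤ} (h : Admissible A) :
    0 < chainD A.tail ∧ chainD A.tail < chainD A := by
  induction A with
  | nil => exact absurd rfl h.1
  | cons a L ih =>
    have ha : 2 ≤ a := h.2 a List.mem_cons_self
    rcases eq_or_ne L [] with rfl | hL
    · simp only [List.tail_cons, chainD]
      omega
    obtain ⟨hpos, hlt⟩ := ih (h.tail hL)
    rw [chainD_cons_of_ne_nil a hL, List.tail_cons]
    constructor <;> nlinarith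

lemma Admissible.inductance_pos {A : List ℤ} (h : Admissible A) : 0 < inductance A := by
  obtain ⟨hpos, hlt⟩ := h.chainD_tail_pos_lt
  exact div_pos (by exact_mod_cast hpos) (by exact_mod_cast hpos.trans hlt)

lemma Admissible.inductance_lt_one {A : List ℤ} (h : Admissible A) : inductance A < 1 := by
  obtain ⟨hpos, hlt⟩ := h.chainD_tail_pos_lt
  rw [inductance, div_lt_one (by exact_mod_cast hpos.trans hlt)]
  exact_mod_cast hlt

lemma inductance_singleton (a : ℤ) : inductance [a] = (a : ℚ)⁻¹ := by
  simp [inductance, chainD]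

lemma inductance_cons (a : ℤ) {L : List ℤ} (hL : Admissible L) :
    inductance (a :: L) = ((a : ℚ) - inductance L)⁻¹ := by
  obtain ⟨hpos, hlt⟩ := hL.chainD_tail_pos_lt
  have hd : (chainD L : ℚ) ≠ 0 := by exact_mod_cast (hpos.trans hlt).ne'
  rw [inductance, List.tail_cons, chainD_cons_of_ne_nil a hL.1, inductance]
  push_cast
  field_simp

lemma Admissible.ceil_inv_inductance_cons {a : ℤ} {L : List ℤ} (h : Admissible (a :: L)) :
    ⌈(inductance (a :: L))⁻¹⌉ = a := by
  rcases eq_or_ne L [] with rfl | hL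
  · simp [inductance_singleton]
  have hL' := h.tail hL
  rw [inductance_cons a hL', inv_inv, Int.ceil_eq_iff]
  constructor <;> linarith [hL'.inductance_pos, hL'.inductance_lt_one]

lemma inductance_cons_ne_singleton (a : ℤ) {L : List ℤ} (hL : Admissible L) :
    inductance (a :: L) ≠ inductance [a] := by
  rw [inductance_cons a hL, inductance_singleton, Ne, inv_inj, sub_eq_self]
  exact hL.inductance_pos.ne'

theorem inductance_injOn : Set.InjOn inductance {A | Admissible A} := by
  intro A hA B hB hAB
  induction A generalizing B with
  | nil => exact absurd rfl hA.1
  | cons a L ih =>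
    obtain ⟨b, M, rfl⟩ := List.exists_cons_of_ne_nil hB.1
    obtain rfl : a = b := by
      rw [← Admissible.ceil_inv_inductance_cons hA, ← Admissible.ceil_inv_inductance_cons hB, hAB]
    rw [List.cons.injEq, eq_self, true_and]
    rcases eq_or_ne L [] with rfl | hL <;> rcases eq_or_ne M [] with rfl | hM
    · rfl
    · exact absurd hAB.symm (inductance_cons_ne_singleton a (hB.tail hM))
    · exact absurd hAB (inductance_cons_ne_singleton a (hA.tail hL))
    · rw [inductance_cons a (hA.tail hL), inductance_cons a (hB.tail hM), inv_inj,
        sub_right_inj] at hAB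
      exact ih (hA.tail hL) (hB.tail hM) hAB

lemma pstar_TW_one (b : ℤ) (M : List ℤ) : pstar (TW 1) (b :: M) = (b + 1) :: M := by
  simp only [TW, List.replicate_one, pstar]
  ring_nf

lemma pstar_TW_add_two (n : ℕ) (b : ℤ) (M : List ℤ) :
    pstar (TW (n + 2)) (b :: M) = 2 :: pstar (TW (n + 1)) (b :: M) := by
  simp [TW, List.replicate_succ, pstar]

lemma admissible_pstar_TW {n : ℕ} (hn : 0 < n) {B : List ℤ} (hB : Admissible B) :
    Admissible (pstar (TW n) B) := by
  obtain ⟨b, M, rfl⟩ := List.exists_cons_of_ne_nil hB.1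
  obtain ⟨n, rfl⟩ := Nat.exists_eq_add_one_of_ne_zero hn.ne'
  induction n with
  | zero =>
    rw [zero_add, pstar_TW_one]
    exact .cons (by linarith [hB.2 b List.mem_cons_self])
      (fun x hx => hB.2 x (List.mem_cons_of_mem b hx))
  | succ n ih =>
    rw [pstar_TW_add_two]
    exact .cons le_rfl (ih n.succ_pos).2

lemma chainD_pstar_TW (n : ℕ) {B : List ℤ} (hB : B ≠ []) :
    chainD (pstar (TW (n + 1)) B) = (n + 1) * chainD B + chainD B.tail ∧
      chainD (pstar (TW (n + 1)) B).tail = n * chainD B + chainD B.tail := by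
  obtain ⟨b, M, rfl⟩ := List.exists_cons_of_ne_nil hB
  induction n with
  | zero =>
    simp only [zero_add, pstar_TW_one, chainD_cons_add_one, List.tail_cons, Nat.cast_zero,
      zero_mul, one_mul, and_self]
  | succ n ih =>
    simp only [pstar_TW_add_two, List.tail_cons] at ih ⊢
    have hne : pstar (TW (n + 1)) (b :: M) ≠ [] := by
      cases n <;> simp [pstar_TW_one, pstar_TW_add_two]
    rw [chainD_cons_of_ne_nil 2 hne, ih.1, ih.2]
    push_cast
    constructor <;> ring

lemma inductance_pstar_TW {n : ℕ} (hn : 0 < n) {B : List ℤ} (hB : Admissible B) :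
    inductance (pstar (TW n) B) = 1 - ((n : ℚ) + inductance B)⁻¹ := by
  obtain ⟨n, rfl⟩ := Nat.exists_eq_add_one_of_ne_zero hn.ne'
  obtain ⟨hd, hd'⟩ := chainD_pstar_TW n hB.1
  obtain ⟨hpos, hlt⟩ := hB.chainD_tail_pos_lt
  rw [inductance, hd, hd', inductance]
  push_cast
  have h0 : (0 : ℚ) < chainD B.tail := by exact_mod_cast hpos
  have h1 : (0 : ℚ) < chainD B := by exact_mod_cast hpos.trans hlt
  generalize (chainD B.tail : ℚ) = d' at *
  generalize (chainD B : ℚ) = d at *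
  have : (n : ℚ) * d + d + d' ≠ 0 := by positivity
  field_simp
  ring

theorem adjoint_append (A As C : List ℤ) (n : ℕ) (hn : 0 < n)
    (hA : Admissible A) (hAs : Admissible As)
    (h1 : inductance As = 1 - inductance A.reverse)
    (hC : Admissible C)
    (h2 : inductance C = 1 - inductance (A ++ [(n : ℤ) + 1]).reverse) :
    C = pstar (TW n) As := by
  apply inductance_injOn hC (admissible_pstar_TW hn hAs)
  rw [h2, inductance_pstar_TW hn hAs, h1, List.reverse_append, List.reverse_singleton,
    List.singleton_append, inductance_cons _ hA.reverse]
  push_cast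
  ring
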